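/- Let H = (M, n, R) be a constant-rate multi-mode system, S ⊆ ℝⁿ an open set admitting a finite cell cover C with |C| = B, and x_s, x_t ∈ S. Then there exists an S-safe finite schedule steering H from x_s to x_t if and only if there exist N ≤ B and points x_0, x_1, …, x_N ∈ ℝⁿ with x_0 = x_s and x_N = x_t such that for every 1 ≤ i ≤ N: (i) the closed line segment {λ·x_{i-1} + (1−λ)·x_i : λ ∈ [0,1]} is contained in S, and (ii) x_i − x_{i-1} = Σ_{m ∈ M} t_i^(m) · R(m) for some nonnegative reals t_i^(m). -/

import Mathlib

/-!
A safe schedule traces a continuous path `γ` in `S` along which every later point differs from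
every earlier one by a nonnegative combination of the rates. Starting in a cell `c`, jump straight
to the last point of `γ` in the closure of `c`: by convexity the segment stays in `c` except for
its endpoint, which lies in `S`. Afterwards `γ` never re-enters `c`, so each cell is used at most
once. Conversely, since `S` is open, a segment in `S` with displacement `∑ t_m • R m` is followed
safely by `K` rounds of all modes with durations `t_m / K`, for `K` so large that each round stays
inside a tubular neighbourhood of the segment contained in `S`.
-/

/-- The terminal state of the run of a schedule (a list of timed actions) from a state. -/
def runEnd {M V : Type*} [AddCommGroup V] [Module ℝ V] (R : M → V) : V → List (M × ℝ) → V
  | x, [] => x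
  | x, (m, t) :: σ => runEnd R (x + t • R m) σ

/-- A schedule is `S`-safe from `x` if every point visited during its run
(including along each timed action) lies in `S`. -/
def SafeSched {M V : Type*} [AddCommGroup V] [Module ℝ V] (R : M → V) (S : Set V) :
    V → List (M × ℝ) → Prop
  | _, [] => True
  | x, (m, t) :: σ =>
      (∀ τ ∈ Set.Icc (0 : ℝ) t, x + τ • R m ∈ S) ∧ SafeSched R S (x + t • R m) σ

/-- A cell of `S` is an open, convex subset of `S`. -/
def IsCell {n : ℕ} (S c : Set (Fin n → ℝ)) : Prop :=
  IsOpen c ∧ Convex ℝ c ∧ c ⊆ S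

open Set Metric Filter Topology

section Schedule

variable {M V : Type*} [AddCommGroup V] [Module ℝ V] (R : M → V) (S : Set V)

lemma runEnd_append (x : V) (σ σ' : List (M × ℝ)) :
    runEnd R x (σ ++ σ') = runEnd R (runEnd R x σ) σ' := by
  induction σ generalizing x with
  | nil => rfl
  | cons e σ ih => exact ih _

lemma safeSched_append (x : V) (σ σ' : List (M × ℝ)) :
    SafeSched R S x (σ ++ σ') ↔ SafeSched R S x σ ∧ SafeSched R S (runEnd R x σ) σ' := by
  induction σ generalizing x with
  | nil => simp [SafeSched, runEnd]
  | cons e σ ih => simp [SafeSched, runEnd, ih, and_assoc]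

lemma runEnd_eq_add_sum (x : V) (σ : List (M × ℝ)) :
    runEnd R x σ = x + (σ.map fun e => e.2 • R e.1).sum := by
  induction σ generalizing x with
  | nil => simp [runEnd]
  | cons e σ ih => simp [runEnd, ih, add_assoc]

def SafeReach (x y : V) : Prop :=
  ∃ σ : List (M × ℝ), (∀ e ∈ σ, 0 ≤ e.2) ∧ SafeSched R S x σ ∧ runEnd R x σ = y

instance : Std.Refl (SafeReach R S) :=
  ⟨fun x => ⟨[], by simp, trivial, rfl⟩⟩

instance : IsTrans V (SafeReach R S) := by
  refine ⟨fun x y z ⟨σ, hσ, hsafe, hxy⟩ ⟨σ', hσ', hsafe', hyz⟩ => ⟨σ ++ σ', ?_, ?_, ?_⟩⟩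
  · simpa [or_imp, forall_and] using And.intro hσ hσ'
  · exact (safeSched_append R S x σ σ').2 ⟨hsafe, hxy ▸ hsafe'⟩
  · rw [runEnd_append, hxy, hyz]

end Schedule

section Chain

variable {α : Type*} {r : α → α → Prop}

def ChainReach (r : α → α → Prop) (N : ℕ) (p q : α) : Prop :=
  ∃ x : ℕ → α, x 0 = p ∧ x N = q ∧ ∀ i, 1 ≤ i → i ≤ N → r (x (i - 1)) (x i)

lemma ChainReach.zero (p : α) : ChainReach r 0 p p :=
  ⟨fun _ => p, rfl, rfl, fun _ h₁ h₀ => by omega⟩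

lemma ChainReach.cons {N : ℕ} {p q s : α} (hpq : r p q) (h : ChainReach r N q s) :
    ChainReach r (N + 1) p s := by
  obtain ⟨x, hx₀, hxN, hx⟩ := h
  refine ⟨fun | 0 => p | i + 1 => x i, rfl, hxN, fun i h₁ h₂ => ?_⟩
  obtain ⟨j, rfl⟩ := Nat.exists_eq_add_of_le' h₁
  rcases j with _ | j
  · simpa [hx₀] using hpq
  · simpa using hx (j + 1) (by omega) (by omega)

lemma ChainReach.reflTransGen {N : ℕ} {p q : α} (h : ChainReach r N p q) :
    Relation.ReflTransGen r p q := by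
  obtain ⟨x, rfl, rfl, hx⟩ := h
  suffices ∀ k ≤ N, Relation.ReflTransGen r (x 0) (x k) from this N le_rfl
  intro k hk
  induction k with
  | zero => rfl
  | succ k ih => exact (ih (by omega)).tail (by simpa using hx (k + 1) (by omega) hk)

end Chain

section Cone

variable {M V : Type*} [Fintype M] [AddCommGroup V] [Module ℝ V] {R : M → V}

def rateCone (R : M → V) : Set V :=
  {d | ∃ t : M → ℝ, (∀ m, 0 ≤ t m) ∧ d = ∑ m, t m • R m}

lemma add_mem_rateCone {d d' : V} (hd : d ∈ rateCone R) (hd' : d' ∈ rateCone R) :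
    d + d' ∈ rateCone R := by
  obtain ⟨t, ht, rfl⟩ := hd
  obtain ⟨t', ht', rfl⟩ := hd'
  exact ⟨t + t', fun m => add_nonneg (ht m) (ht' m), by simp [add_smul, Finset.sum_add_distrib]⟩

lemma smul_mem_rateCone (m : M) {s : ℝ} (hs : 0 ≤ s) : s • R m ∈ rateCone R := by
  classical
  refine ⟨Pi.single m s, fun m' => ?_, by simp [Pi.single_apply]⟩
  by_cases h : m' = m <;> simp [h, hs]

end Cone

section Trajectory

variable {M V : Type*} [NormedAddCommGroup V] [NormedSpace ℝ V] (R : M → V) {S : Set V}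

/-- The displacement after running a schedule for time `τ`, clamped to `[0, total duration]`. -/
def runDisp : List (M × ℝ) → ℝ → V
  | [], _ => 0
  | (m, t) :: σ, τ => max 0 (min τ t) • R m + runDisp σ (τ - t)

lemma continuous_runDisp (σ : List (M × ℝ)) : Continuous (runDisp R σ) := by
  induction σ with
  | nil => exact continuous_const
  | cons e σ ih =>
    obtain ⟨m, t⟩ := e
    exact ((continuous_const.max (continuous_id.min continuous_const)).smul continuous_const).add
      (ih.comp (continuous_id.sub continuous_const))

variable {R} {σ : List (M × ℝ)} (hσ : ∀ e ∈ σ, 0 ≤ e.2)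
include hσ

lemma sum_map_snd_nonneg : 0 ≤ (σ.map Prod.snd).sum :=
  List.sum_nonneg fun _ ha => by
    obtain ⟨e, he, rfl⟩ := List.mem_map.1 ha
    exact hσ e he

lemma runDisp_of_nonpos {τ : ℝ} (hτ : τ ≤ 0) : runDisp R σ τ = 0 := by
  induction σ generalizing τ with
  | nil => rfl
  | cons e σ ih =>
    obtain ⟨m, t⟩ := e
    have ht : 0 ≤ t := hσ _ List.mem_cons_self
    simp [runDisp, ih (fun e he => hσ e (List.mem_cons_of_mem _ he)) (by linarith : τ - t ≤ 0),
      min_le_of_left_le hτ]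

lemma add_runDisp_of_le (x : V) {τ : ℝ} (hτ : (σ.map Prod.snd).sum ≤ τ) :
    x + runDisp R σ τ = runEnd R x σ := by
  induction σ generalizing x τ with
  | nil => simp [runDisp, runEnd]
  | cons e σ ih =>
    obtain ⟨m, t⟩ := e
    have ht : 0 ≤ t := hσ _ List.mem_cons_self
    have hσ' : ∀ e ∈ σ, 0 ≤ e.2 := fun e he => hσ e (List.mem_cons_of_mem _ he)
    have hrest := sum_map_snd_nonneg hσ'
    simp only [List.map_cons, List.sum_cons] at hτ
    rw [runDisp, runEnd, ← ih hσ' _ (by linarith : (σ.map Prod.snd).sum ≤ τ - t),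
      min_eq_right (by linarith), max_eq_right ht, add_assoc]

lemma add_runDisp_mem {x : V} (hsafe : SafeSched R S x σ) (hx : x ∈ S) {τ : ℝ}
    (hτ : τ ∈ Icc 0 (σ.map Prod.snd).sum) : x + runDisp R σ τ ∈ S := by
  induction σ generalizing x τ with
  | nil => simpa [runDisp] using hx
  | cons e σ ih =>
    obtain ⟨m, t⟩ := e
    have hσ' : ∀ e ∈ σ, 0 ≤ e.2 := fun e he => hσ e (List.mem_cons_of_mem _ he)
    obtain ⟨hseg, hsafe'⟩ := hsafe
    simp only [List.map_cons, List.sum_cons] at hτ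
    rw [runDisp]
    rcases le_total τ t with hτt | htτ
    · rw [min_eq_left hτt, max_eq_right hτ.1, runDisp_of_nonpos hσ' (by linarith), add_zero]
      exact hseg τ ⟨hτ.1, hτt⟩
    · have ht : 0 ≤ t := hσ _ List.mem_cons_self
      rw [min_eq_right htτ, max_eq_right ht, ← add_assoc]
      exact ih hσ' hsafe' (hseg t ⟨ht, le_rfl⟩) ⟨by linarith, by linarith [hτ.2]⟩

omit hσ in
lemma runDisp_sub_mem_rateCone [Fintype M] (σ : List (M × ℝ)) {s τ : ℝ} (h : s ≤ τ) :
    runDisp R σ τ - runDisp R σ s ∈ rateCone R := by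
  induction σ generalizing s τ with
  | nil => exact ⟨0, fun _ => le_rfl, by simp [runDisp]⟩
  | cons e σ ih =>
    obtain ⟨m, t⟩ := e
    have hclamp : max 0 (min s t) ≤ max 0 (min τ t) := max_le_max le_rfl (min_le_min_right t h)
    convert add_mem_rateCone (smul_mem_rateCone m (sub_nonneg.2 hclamp))
      (ih (by linarith : s - t ≤ τ - t)) using 1
    simp only [runDisp, sub_smul]
    abel

end Trajectory

section Compression

lemma exists_last_mem_closure {X : Type*} [TopologicalSpace X] {c : Set X} {γ : ℝ → X}
    (hγ : Continuous γ) (hc : IsOpen c) {a T : ℝ} (haT : a ≤ T) (ha : γ a ∈ c) :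
    ∃ b ∈ Icc a T, γ b ∈ closure c ∧ (b < T → ∀ τ ∈ Icc b T, γ τ ∉ c) := by
  have hcpt : IsCompact (Icc a T ∩ γ ⁻¹' closure c) :=
    isCompact_Icc.inter_right (isClosed_closure.preimage hγ)
  obtain ⟨b, ⟨hb, hbc⟩, hmax⟩ :=
    hcpt.exists_isGreatest ⟨a, left_mem_Icc.2 haT, subset_closure ha⟩
  refine ⟨b, hb, hbc, fun hbT τ hτ hτc => ?_⟩
  have later : ∀ τ' ∈ Ioc b T, γ τ' ∉ c := fun τ' hτ' hτ'c =>
    (hmax ⟨⟨hb.1.trans hτ'.1.le, hτ'.2⟩, subset_closure hτ'c⟩).not_gt hτ'.1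
  rcases hτ.1.eq_or_lt with rfl | hlt
  · -- `c` is open, so `γ` stays in `c` for a while after `b`
    obtain ⟨τ', hτ'c, hτ'⟩ := Filter.nonempty_of_mem (inter_mem (mem_nhdsWithin_of_mem_nhds
      (hγ.continuousAt.preimage_mem_nhds (hc.mem_nhds hτc))) (Ioo_mem_nhdsGT hbT))
    exact later τ' ⟨hτ'.1, hτ'.2.le⟩ hτ'c
  · exact later τ ⟨hlt, hτ.2⟩ hτc

variable {V : Type*} [NormedAddCommGroup V] [NormedSpace ℝ V] {S c : Set V}

def SafeSegment (S K : Set V) (p q : V) : Prop :=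
  segment ℝ p q ⊆ S ∧ q - p ∈ K

lemma segment_subset_of_mem_closure (hc : IsOpen c) (hconv : Convex ℝ c) (hcS : c ⊆ S)
    {p q : V} (hp : p ∈ c) (hq : q ∈ closure c) (hqS : q ∈ S) : segment ℝ p q ⊆ S := by
  rw [← insert_endpoints_openSegment]
  rintro z (rfl | rfl | hz)
  · exact hcS hp
  · exact hqS
  · rw [← hc.interior_eq] at hp
    exact hcS (interior_subset (hconv.openSegment_interior_closure_subset_interior hp hq hz))

theorem exists_chainReach_of_image_subset_biUnion {K : Set V} {γ : ℝ → V} (hγ : Continuous γ)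
    (hK : ∀ s t, s ≤ t → γ t - γ s ∈ K) (C : Finset (Set V))
    (hC : ∀ c ∈ C, IsOpen c ∧ Convex ℝ c ∧ c ⊆ S) {a T : ℝ} (haT : a ≤ T)
    (hcov : γ '' Icc a T ⊆ ⋃ c ∈ C, c) :
    ∃ N ≤ C.card, ChainReach (SafeSegment S K) N (γ a) (γ T) := by
  classical
  induction C using Finset.strongInduction generalizing a with
  | H C ih =>
    have hcov' : ∀ τ ∈ Icc a T, ∃ c ∈ C, γ τ ∈ c := fun τ hτ => by
      simpa using hcov (mem_image_of_mem γ hτ)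
    obtain ⟨c, hcC, hac⟩ := hcov' a (left_mem_Icc.2 haT)
    obtain ⟨hco, hconv, hcS⟩ := hC c hcC
    obtain ⟨b, hb, hbc, hafter⟩ := exists_last_mem_closure hγ hco haT hac
    have hbS : γ b ∈ S := by
      obtain ⟨c', hc'C, hbc'⟩ := hcov' b hb
      exact (hC c' hc'C).2.2 hbc'
    have hstep : SafeSegment S K (γ a) (γ b) :=
      ⟨segment_subset_of_mem_closure hco hconv hcS hac hbc hbS, hK a b hb.1⟩
    rcases hb.2.eq_or_lt with rfl | hbT
    · exact ⟨1, Finset.card_pos.2 ⟨c, hcC⟩, ChainReach.cons hstep (ChainReach.zero _)⟩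
    have hcov_erase : γ '' Icc b T ⊆ ⋃ c' ∈ C.erase c, c' := by
      rintro _ ⟨τ, hτ, rfl⟩
      obtain ⟨c', hc'C, hτc'⟩ := hcov' τ ⟨hb.1.trans hτ.1, hτ.2⟩
      have hc'c : c' ≠ c := by
        rintro rfl
        exact hafter hbT τ hτ hτc'
      exact mem_biUnion (Finset.mem_erase.2 ⟨hc'c, hc'C⟩) hτc'
    obtain ⟨N, hN, hchain⟩ := ih (C.erase c) (Finset.erase_ssubset hcC)
      (fun c' hc' => hC c' (Finset.mem_of_mem_erase hc')) hb.2 hcov_erase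
    refine ⟨N + 1, ?_, ChainReach.cons hstep hchain⟩
    have := Finset.card_erase_add_one hcC
    omega

end Compression

section Realization

variable {M V : Type*} [NormedAddCommGroup V] [NormedSpace ℝ V] {R : M → V} {S : Set V}

lemma safeSched_of_closedBall_subset {x : V} {σ : List (M × ℝ)}
    (hball : closedBall x (σ.map fun e => ‖e.2 • R e.1‖).sum ⊆ S) : SafeSched R S x σ := by
  induction σ generalizing x with
  | nil => trivial
  | cons e σ ih =>
    obtain ⟨m, t⟩ := e
    set r := (σ.map fun e => ‖e.2 • R e.1‖).sum
    have hr : 0 ≤ r := List.sum_nonneg fun _ ha => by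
      obtain ⟨e, -, rfl⟩ := List.mem_map.1 ha
      positivity
    simp only [List.map_cons, List.sum_cons] at hball
    refine ⟨fun τ hτ => hball ?_, ih (subset_trans ?_ hball)⟩
    · have : ‖τ • R m‖ ≤ ‖t • R m‖ := by
        rw [norm_smul, norm_smul]
        gcongr
        rw [Real.norm_of_nonneg hτ.1]
        exact hτ.2.trans (Real.le_norm_self t)
      rw [mem_closedBall, dist_self_add_left]
      linarith
    · exact closedBall_subset_closedBall' (by rw [dist_self_add_left, add_comm])

variable [Fintype M]

lemma safeReach_add_sum_of_closedBall_subset {y : V} {t : M → ℝ} (ht : ∀ m, 0 ≤ t m)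
    (hball : closedBall y (∑ m, ‖t m • R m‖) ⊆ S) : SafeReach R S y (y + ∑ m, t m • R m) := by
  refine ⟨Finset.univ.toList.map fun m => (m, t m), ?_, ?_, ?_⟩
  · simpa using fun m => ht m
  · apply safeSched_of_closedBall_subset
    simpa [List.map_map, Function.comp_def, Finset.sum_map_toList] using hball
  · simp [runEnd_eq_add_sum, List.map_map, Function.comp_def, Finset.sum_map_toList]

theorem safeReach_of_safeSegment (hS : IsOpen S) {a b : V}
    (hab : SafeSegment S (rateCone R) a b) : SafeReach R S a b := by
  obtain ⟨hseg, t, ht, hd⟩ := hab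
  have hcpt : IsCompact (segment ℝ a b) := by
    rw [segment_eq_image']
    exact isCompact_Icc.image (by fun_prop)
  obtain ⟨ε, hε, hthick⟩ := hcpt.exists_thickening_subset_open hS hseg
  set L := ∑ m, ‖t m • R m‖
  obtain ⟨K, hK⟩ := exists_nat_gt (L / ε)
  have hKpos : (0 : ℝ) < K := lt_of_le_of_lt (by positivity) hK
  -- follow the segment in `K` rounds, each staying within distance `L / K < ε` of the segment
  have hround : L / K < ε := (div_lt_iff₀ hKpos).2 (by rwa [div_lt_iff₀ hε, mul_comm] at hK)
  have hpieces : ∀ j ≤ K, SafeReach R S a (a + ((j : ℝ) / K) • (b - a)) := by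
    intro j hj
    induction j with
    | zero => simpa using refl_of (SafeReach R S) a
    | succ j ih =>
      refine _root_.trans (ih (by omega)) ?_
      have hy : a + ((j : ℝ) / K) • (b - a) ∈ segment ℝ a b := by
        rw [segment_eq_image']
        exact ⟨j / K, ⟨by positivity, (div_le_one hKpos).2 (by exact_mod_cast (by omega : j ≤ K))⟩,
          rfl⟩
      have hstep := safeReach_add_sum_of_closedBall_subset (R := R) (S := S)
        (y := a + ((j : ℝ) / K) • (b - a)) (t := fun m => t m / K)
        (fun m => div_nonneg (ht m) hKpos.le) ?_
      · convert hstep using 1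
        simp only [div_eq_inv_mul, mul_smul, ← Finset.smul_sum, ← hd]
        push_cast
        module
      · have hL : ∑ m, ‖(t m / K) • R m‖ = L / K := by
          simp only [L, div_eq_inv_mul, mul_smul, norm_smul (K : ℝ)⁻¹,
            Real.norm_of_nonneg (inv_nonneg.2 hKpos.le), Finset.mul_sum]
        rw [hL]
        exact (closedBall_subset_ball hround).trans ((ball_subset_thickening hy ε).trans hthick)
  simpa [hKpos.ne'] using hpieces K le_rfl

theorem safeReach_of_chainReach (hS : IsOpen S) {N : ℕ} {x y : V}
    (h : ChainReach (SafeSegment S (rateCone R)) N x y) : SafeReach R S x y := by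
  rw [← Relation.reflTransGen_eq_self (r := SafeReach R S)]
  exact Relation.ReflTransGen.mono (fun _ _ => safeReach_of_safeSegment hS) _ _ h.reflTransGen

end Realization

theorem exists_chainReach_of_safeReach {M V : Type*} [Fintype M] [NormedAddCommGroup V]
    [NormedSpace ℝ V] {R : M → V} {S : Set V} {C : Finset (Set V)}
    (hC : ∀ c ∈ C, IsOpen c ∧ Convex ℝ c ∧ c ⊆ S) (hcover : (⋃ c ∈ C, c) = S) {x y : V}
    (hx : x ∈ S) (h : SafeReach R S x y) :
    ∃ N ≤ C.card, ChainReach (SafeSegment S (rateCone R)) N x y := by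
  obtain ⟨σ, hσ, hsafe, rfl⟩ := h
  have hchain := exists_chainReach_of_image_subset_biUnion
    (continuous_const.add (continuous_runDisp R σ)) (fun s τ hsτ => by
      simpa using runDisp_sub_mem_rateCone σ hsτ) C hC (sum_map_snd_nonneg hσ)
    (hcover ▸ image_subset_iff.2 fun τ hτ => add_runDisp_mem hσ hsafe hx hτ)
  simpa [runDisp_of_nonpos hσ le_rfl, add_runDisp_of_le hσ x le_rfl] using hchain

theorem stmt8_general {M : Type*} [Fintype M] {n : ℕ}
    (R : M → (Fin n → ℝ)) (S : Set (Fin n → ℝ)) (hSopen : IsOpen S)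
    (C : Finset (Set (Fin n → ℝ))) (hcell : ∀ c ∈ C, IsCell S c)
    (hcover : (⋃ c ∈ C, c) = S)
    (B : ℕ) (hB : B = C.card)
    (xs xt : Fin n → ℝ) (hxs : xs ∈ S) :
    (∃ σ : List (M × ℝ), (∀ p ∈ σ, 0 ≤ p.2) ∧ SafeSched R S xs σ ∧ runEnd R xs σ = xt) ↔
      (∃ N ≤ B, ∃ x : ℕ → (Fin n → ℝ), x 0 = xs ∧ x N = xt ∧
        ∀ i, 1 ≤ i → i ≤ N →
          segment ℝ (x (i - 1)) (x i) ⊆ S ∧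
          ∃ t : M → ℝ, (∀ m, 0 ≤ t m) ∧ x i - x (i - 1) = ∑ m, t m • R m) := by
  change SafeReach R S xs xt ↔ ∃ N ≤ B, ChainReach (SafeSegment S (rateCone R)) N xs xt
  subst hB
  constructor
  · exact exists_chainReach_of_safeReach hcell hcover hxs
  · rintro ⟨N, -, hchain⟩
    exact safeReach_of_chainReach hSopen hchain

/-- Correctness of the bounded motion-planning procedure: for an open safety set `S`
admitting a finite cell cover `C` with `|C| = B` and `x_s, x_t ∈ S`, an `S`-safe
schedule from `x_s` to `x_t` exists iff there are `N ≤ B` intermediate points whose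
consecutive closed segments lie in `S` and whose consecutive differences are
nonnegative combinations of the rate vectors. -/
theorem stmt8 {M : Type*} [Fintype M] [Nonempty M] {n : ℕ} (hn : 0 < n)
    (R : M → (Fin n → ℝ)) (S : Set (Fin n → ℝ)) (hSopen : IsOpen S)
    (C : Finset (Set (Fin n → ℝ))) (hcell : ∀ c ∈ C, IsCell S c)
    (hcover : (⋃ c ∈ C, c) = S)
    (B : ℕ) (hB : B = C.card)
    (xs xt : Fin n → ℝ) (hxs : xs ∈ S) (hxt : xt ∈ S) :
    (∃ σ : List (M × ℝ), (∀ p ∈ σ, 0 ≤ p.2) ∧ SafeSched R S xs σ ∧ runEnd R xs σ = xt) ↔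
      (∃ N ≤ B, ∃ x : ℕ → (Fin n → ℝ), x 0 = xs ∧ x N = xt ∧
        ∀ i, 1 ≤ i → i ≤ N →
          segment ℝ (x (i - 1)) (x i) ⊆ S ∧
          ∃ t : M → ℝ, (∀ m, 0 ≤ t m) ∧ x i - x (i - 1) = ∑ m, t m • R m) :=
  stmt8_general R S hSopen C hcell hcover B hB xs xt hxs
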